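/- In the ACeD incentive game, the strategy profile All-Offline is a (Bayesian) Nash equilibrium: each player's utility under All-O is 0, and any unilateral deviation to Cooperate yields utility ≤ −c_s < 0 (paying verification cost without changing the outcome) while deviating to Defect yields utility ≤ 0. -/
import Mathlib


/-- Actions available to an oracle node in the ACeD incentive game. -/
inductive ACeDAction : Type
  | Cooperate
  | Offline
  | Defect
deriving DecidableEq

open ACeDAction in
/-- All-Offline is a Nash equilibrium of the ACeD incentive game: if fewer than the
commit threshold `θ ≥ 2` of the `N` oracle nodes cooperate, the block is not
committed; then offline nodes get utility `0`, cooperating nodes pay at least the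
verification cost `c_s > 0` (utility `≤ −c_s < 0`), and defecting nodes get utility
`≤ 0`. Hence no node can improve its utility `0` by unilaterally deviating from the
all-Offline profile. -/
theorem stmt_15 (N θ : ℕ) (hθ : 2 ≤ θ) (c_s : ℝ) (hcs : 0 < c_s)
    (u : (Fin N → ACeDAction) → Fin N → ℝ)
    (huO : ∀ σ i, ((Finset.univ.filter fun j => σ j = Cooperate).card < θ) →
      σ i = Offline → u σ i = 0)
    (huC : ∀ σ i, ((Finset.univ.filter fun j => σ j = Cooperate).card < θ) →
      σ i = Cooperate → u σ i ≤ -c_s)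
    (huD : ∀ σ i, ((Finset.univ.filter fun j => σ j = Cooperate).card < θ) →
      σ i = Defect → u σ i ≤ 0) :
    ∀ (i : Fin N) (a : ACeDAction),
      u (Function.update (fun _ => Offline) i a) i ≤ u (fun _ => Offline) i := by
  intro i a
  have hbase : ((Finset.univ.filter fun j => (fun _ : Fin N => Offline) j = Cooperate).card < θ) := by
    have : (Finset.univ.filter fun j : Fin N => (fun _ : Fin N => Offline) j = Cooperate) = ∅ := by
      apply Finset.filter_false_of_mem; intro x _; simp
    rw [this]; simpa using lt_of_lt_of_le (by norm_num) hθ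
  have hdev : ((Finset.univ.filter fun j => Function.update (fun _ : Fin N => Offline) i a j = Cooperate).card < θ) := by
    have hsub : (Finset.univ.filter fun j => Function.update (fun _ : Fin N => Offline) i a j = Cooperate) ⊆ {i} := by
      intro j hj
      simp only [Finset.mem_filter, Finset.mem_univ, true_and] at hj
      by_contra h
      simp only [Finset.mem_singleton] at h
      rw [Function.update_of_ne h] at hj
      exact absurd hj (by simp)
    calc _ ≤ ({i} : Finset (Fin N)).card := Finset.card_le_card hsub
    _ = 1 := Finset.card_singleton i
    _ < θ := lt_of_lt_of_le (by norm_num) hθ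
  have h0 : u (fun _ => Offline) i = 0 := huO _ i hbase rfl
  rw [h0]
  cases a with
  | Offline => rw [huO _ i hdev (by simp)]
  | Cooperate =>
    have := huC _ i hdev (by simp)
    linarith
  | Defect => exact huD _ i hdev (by simp)
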